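/- Let X_1,...,X_n be real-valued random variables whose marginal distribution functions F_1,...,F_n are all regularly varying with the same index −α for some α > 0 (F_i ∈ 𝓡_{−α}), and whose joint distribution is given by a multivariate Farlie–Gumbel–Morgenstern copula: P(X_1 ≤ x_1,...,X_n ≤ x_n) = ∏_{i=1}^{n} F_i(x_i) · (1 + ∑_{k=2}^{n} ∑_{1≤j_1<...<j_k≤n} θ_{j_1...j_k} (1−F_{j_1})(x_{j_1}) ⋯ (1−F_{j_k})(x_{j_k})), where the real parameters θ satisfy |θ_{j_1...j_k}| ≤ 1 and the right-hand side is a proper multivariate distribution function (so that in particular P(X_i > s, X_j > t) = (1−F_i)(s)(1−F_j)(t)(1 + θ_{ij} F_i(s) F_j(t)) for all i ≠ j). Then: the maximum X_{n:n} belongs to 𝓡_{−α} (hence to 𝓛 ∩ 𝓓); and for every p ∈ (1/2, 1), the dominatedly varying function h(x) = x^p belongs to 𝓗_{X_{n:n}} and satisfies condition (DS1) for every t > 0 and condition (DS2) for L = 1; i.e. Assumptions B and C both hold for X_1,...,X_n. -/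

import Mathlib

open MeasureTheory Filter Topology Asymptotics

noncomputable section

/-- Tail probability `P(Y > x)` of a real random variable. -/
def tailP {Ω : Type*} [MeasurableSpace Ω] (μ : Measure Ω) (Y : Ω → ℝ) (x : ℝ) : ℝ :=
  (μ {ω | x < Y ω}).toReal

/-- The maximum `X_{n:n}` of finitely many random variables. -/
def maxRV {Ω : Type*} {n : ℕ} (X : Fin n → Ω → ℝ) (ω : Ω) : ℝ := ⨆ i, X i ω

/-- The `i`-th largest value (descending order statistic, `0`-indexed):
`ordDesc X i = X_{n-i:n}`. -/
def ordDesc {Ω : Type*} {n : ℕ} (X : Fin n → Ω → ℝ) (i : Fin n) (ω : Ω) : ℝ :=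
  (((List.ofFn fun j => X j ω).mergeSort fun a b => decide (b ≤ a)).getD i 0)

/-- A tail function `T = 1 - F` is long-tailed (`F ∈ 𝓛`). -/
def LongTailedT (T : ℝ → ℝ) : Prop :=
  (∀ x : ℝ, 0 ≤ x → 0 < T x) ∧
  ∀ y : ℝ, Tendsto (fun x => T (x + y) / T x) atTop (𝓝 1)

/-- A function is dominatedly varying. -/
def DomVarFun (h : ℝ → ℝ) : Prop :=
  ∀ y : ℝ, 0 < y →
    (0 : EReal) < atTop.liminf (fun x => ((h (x * y) / h x : ℝ) : EReal)) ∧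
    atTop.limsup (fun x => ((h (x * y) / h x : ℝ) : EReal)) < ⊤

/-- A function is weakly self-neglecting. -/
def WeaklySelfNeg (h : ℝ → ℝ) : Prop :=
  ∀ y : ℝ, atTop.limsup (fun x => ((h (x + y * h x) / h x : ℝ) : EReal)) < ⊤

/-- `h ∈ 𝓗_F` where `T = 1 - F` is the tail of `F`. -/
def MemScaleClass (T h : ℝ → ℝ) : Prop :=
  (∀ᶠ x in atTop, 0 < h x) ∧
  (h =o[atTop] fun x : ℝ => x) ∧
  (∀ y : ℝ, Tendsto (fun x => T (x + y * h x) / T x) atTop (𝓝 1)) ∧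
  WeaklySelfNeg h

/-- Upper endpoint `x_F = sup {x : F(x) < 1}` of a distribution with tail `T = 1 - F`. -/
def upEnd (T : ℝ → ℝ) : EReal := sSup ((fun x : ℝ => (x : EReal)) '' {x | 0 < T x})

open Classical in
/-- The filter of "`x → x_F`". -/
def endFilter (T : ℝ → ℝ) : Filter ℝ :=
  if upEnd T = ⊤ then atTop else 𝓝[<] (upEnd T).toReal

/-- `F ∈ GMDA(h)` for `T = 1 - F`. -/
def MemGMDA (T h : ℝ → ℝ) : Prop :=
  (∀ x, 0 < h x) ∧
  ∀ y : ℝ, Tendsto (fun x => T (x + y * h x) / T x) (endFilter T) (𝓝 (Real.exp (-y)))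

/-- Condition (DS1) (for all `t > 0`). -/
def DS1 {Ω : Type*} [MeasurableSpace Ω] (μ : Measure Ω) {n : ℕ} (X : Fin n → Ω → ℝ)
    (h : ℝ → ℝ) : Prop :=
  ∀ t : ℝ, 0 < t → ∀ i j : Fin n, i ≠ j →
    Tendsto (fun x => (μ {ω | t * h x < |X i ω| ∧ x < X j ω}).toReal / tailP μ (maxRV X) x)
      atTop (𝓝 0)

/-- Condition (DS2) for a given `L > 0`. -/
def DS2 {Ω : Type*} [MeasurableSpace Ω] (μ : Measure Ω) {n : ℕ} (X : Fin n → Ω → ℝ)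
    (h : ℝ → ℝ) (L : ℝ) : Prop :=
  ∀ i j : Fin n, i < j →
    Tendsto (fun x => (μ {ω | L * h x < X i ω ∧ L * h x < X j ω}).toReal / tailP μ (maxRV X) x)
      atTop (𝓝 0)

/-- Condition (v1). -/
def CondV1 {Ω : Type*} [MeasurableSpace Ω] (μ : Measure Ω) {n : ℕ} (X : Fin n → Ω → ℝ) : Prop :=
  ∀ i j : Fin n, i < j →
    Tendsto (fun x => (μ {ω | x < X i ω ∧ x < X j ω}).toReal / tailP μ (maxRV X) x)
      atTop (𝓝 0)

/-- Assumption A: `X_{n:n}` has an infinite upper endpoint, `X_{n:n} ∈ GMDA(h)`,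
(DS1) holds for all `t > 0` and (DS2) for some `L > 0`. -/
def AssumptionA {Ω : Type*} [MeasurableSpace Ω] (μ : Measure Ω) {n : ℕ}
    (X : Fin n → Ω → ℝ) : Prop :=
  ∃ h : ℝ → ℝ,
    (∀ x : ℝ, 0 < tailP μ (maxRV X) x) ∧
    MemGMDA (tailP μ (maxRV X)) h ∧
    DS1 μ X h ∧ ∃ L : ℝ, 0 < L ∧ DS2 μ X h L

/-- Assumption B: `X_{n:n} ∈ 𝓛` and some `h ∈ 𝓗_{X_{n:n}}` satisfies (DS1) for all `t > 0`
and (DS2) for some `L > 0`. -/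
def AssumptionB {Ω : Type*} [MeasurableSpace Ω] (μ : Measure Ω) {n : ℕ}
    (X : Fin n → Ω → ℝ) : Prop :=
  LongTailedT (tailP μ (maxRV X)) ∧
  ∃ h : ℝ → ℝ, MemScaleClass (tailP μ (maxRV X)) h ∧
    DS1 μ X h ∧ ∃ L : ℝ, 0 < L ∧ DS2 μ X h L

/-- Assumption C: `X_{n:n} ∈ 𝓛 ∩ 𝓓` and some dominatedly varying `h ∈ 𝓗_{X_{n:n}}`
satisfies (DS1) for all `t > 0`. -/
def AssumptionC {Ω : Type*} [MeasurableSpace Ω] (μ : Measure Ω) {n : ℕ}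
    (X : Fin n → Ω → ℝ) : Prop :=
  LongTailedT (tailP μ (maxRV X)) ∧ DomVarFun (tailP μ (maxRV X)) ∧
  ∃ h : ℝ → ℝ, DomVarFun h ∧ MemScaleClass (tailP μ (maxRV X)) h ∧ DS1 μ X h

/-- The uniform (in the weights `c ∈ K`) max-sum asymptotic equivalence (max-sum0):
`P(∑ c_i X_{n-i:n} > x) ~ P(c_0 X_{n:n} > x) ~ ∑ P(c_0 X_i > x)` uniformly on `K`. -/
def UnifMaxSum {Ω : Type*} [MeasurableSpace Ω] (μ : Measure Ω) {n : ℕ} [NeZero n]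
    (X : Fin n → Ω → ℝ) (K : Set (Fin n → ℝ)) : Prop :=
  TendstoUniformlyOn
    (fun x (c : Fin n → ℝ) =>
      tailP μ (fun ω => ∑ i, c i * ordDesc X i ω) x /
        tailP μ (fun ω => c 0 * maxRV X ω) x) 1 atTop K ∧
  TendstoUniformlyOn
    (fun x (c : Fin n → ℝ) =>
      tailP μ (fun ω => c 0 * maxRV X ω) x /
        ∑ i, tailP μ (fun ω => c 0 * X i ω) x) 1 atTop K

end

/-- A tail function is regularly varying with index `-α`. -/
def RegVarTail (T : ℝ → ℝ) (α : ℝ) : Prop :=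
  ∀ y : ℝ, 0 < y → Tendsto (fun x => T (x * y) / T x) atTop (𝓝 (y ^ (-α)))

/-!
Expanding the FGM copula at `(x, …, x)` gives
`P(X_{n:n} > x) = ∑ᵢ P(Xᵢ > x) + O((∑ᵢ P(Xᵢ > x))²)`, so the tail of the maximum is asymptotically
equivalent to a sum of tails that are regularly varying with the same index, and is therefore
regularly varying itself. Regular variation with index `-α` gives long-tailedness, dominated
variation and `T(x + o(x)) ~ T(x)`, hence `x^p ∈ 𝓗` for `p < 1`.

The bivariate FGM margins satisfy `P(Xᵢ > s, Xⱼ > t) ≤ 2 P(Xᵢ > s) P(Xⱼ > t)` and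
`P(Xᵢ ≤ s, Xⱼ > t) ≤ 2 P(Xᵢ ≤ s) P(Xⱼ > t)`. Thus (DS1) reduces to `P(|Xᵢ| > t x^p) → 0`, and
(DS2) to `P(X_{n:n} > x^p)² = o(P(X_{n:n} > x))`, which follows from Potter's bounds since
`2p > 1`.
-/

open ProbabilityTheory

lemma abs_mul_mul_le_one {θ a b : ℝ} (hθ : |θ| ≤ 1) (ha : |a| ≤ 1) (hb : |b| ≤ 1) :
    |θ * a * b| ≤ 1 := by
  rw [abs_mul, abs_mul]
  exact mul_le_one₀ (mul_le_one₀ hθ (abs_nonneg _) ha) (abs_nonneg _) hb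

lemma abs_sum_div_sum_sub_le {ι : Type*} {s : Finset ι} (hs : s.Nonempty) {f g : ι → ℝ}
    (hg : ∀ i ∈ s, 0 < g i) (c : ℝ) :
    |(∑ i ∈ s, f i) / (∑ i ∈ s, g i) - c| ≤ ∑ i ∈ s, |f i / g i - c| := by
  have hsum : 0 < ∑ i ∈ s, g i := Finset.sum_pos hg hs
  have hnum : (∑ i ∈ s, f i) - (∑ i ∈ s, g i) * c = ∑ i ∈ s, (f i / g i - c) * g i := by
    rw [Finset.sum_mul, ← Finset.sum_sub_distrib]
    exact Finset.sum_congr rfl fun i hi => by field_simp [(hg i hi).ne']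
  rw [div_sub' hsum.ne', abs_div, abs_of_pos hsum, div_le_iff₀ hsum, hnum, Finset.sum_mul]
  refine (Finset.abs_sum_le_sum_abs _ _).trans (Finset.sum_le_sum fun i hi => ?_)
  rw [abs_mul, abs_of_pos (hg i hi)]
  exact mul_le_mul_of_nonneg_left
    (Finset.single_le_sum (fun j hj => (hg j hj).le) hi) (abs_nonneg _)

lemma tendsto_sum_div_sum {ι α : Type*} {l : Filter α} {s : Finset ι} (hs : s.Nonempty)
    {f g : ι → α → ℝ} (hg : ∀ i ∈ s, ∀ x, 0 < g i x) {c : ℝ}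
    (h : ∀ i ∈ s, Tendsto (fun x => f i x / g i x) l (𝓝 c)) :
    Tendsto (fun x => (∑ i ∈ s, f i x) / (∑ i ∈ s, g i x)) l (𝓝 c) := by
  rw [tendsto_iff_norm_sub_tendsto_zero]
  refine squeeze_zero (fun _ => norm_nonneg _)
    (fun x => abs_sum_div_sum_sub_le hs (fun i hi => hg i hi x) c) ?_
  simpa using tendsto_finsetSum s fun i hi => (tendsto_iff_norm_sub_tendsto_zero.1 (h i hi))

lemma domVarFun_of_tendsto {h : ℝ → ℝ}
    (H : ∀ y, 0 < y → ∃ c, 0 < c ∧ Tendsto (fun x => h (x * y) / h x) atTop (𝓝 c)) :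
    DomVarFun h := by
  intro y hy
  obtain ⟨c, hc, hlim⟩ := H y hy
  have hE := EReal.tendsto_coe.2 hlim
  rw [hE.liminf_eq, hE.limsup_eq]
  exact ⟨EReal.coe_pos.2 hc, EReal.coe_lt_top c⟩

lemma le_two_pow_rpow_mul_of_mul_two_le {g : ℝ → ℝ} {a x₀ : ℝ} (hx₀ : 0 ≤ x₀)
    (h : ∀ x ≥ x₀, g (x * 2) ≤ 2 ^ a * g x) (k : ℕ) :
    g (x₀ * 2 ^ k) ≤ ((2 : ℝ) ^ k) ^ a * g x₀ := by
  induction k with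
  | zero => simp
  | succ k ih =>
    calc g (x₀ * 2 ^ (k + 1)) = g (x₀ * 2 ^ k * 2) := by rw [pow_succ, mul_assoc]
      _ ≤ 2 ^ a * g (x₀ * 2 ^ k) :=
        h _ (le_mul_of_one_le_right hx₀ (one_le_pow₀ one_le_two))
      _ ≤ 2 ^ a * (((2 : ℝ) ^ k) ^ a * g x₀) := mul_le_mul_of_nonneg_left ih (by positivity)
      _ = ((2 : ℝ) ^ (k + 1)) ^ a * g x₀ := by
        rw [pow_succ, Real.mul_rpow (by positivity) zero_le_two]; ring

lemma isEquivalent_of_abs_sub_le_mul_sq {α : Type*} {l : Filter α} {f g : α → ℝ} {C : ℝ}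
    (hg : Tendsto g l (𝓝 0)) (h : ∀ᶠ x in l, |f x - g x| ≤ C * g x ^ 2) : f ~[l] g := by
  have hsq : (fun x => g x ^ 2) =o[l] g := by
    simpa [sq] using ((isLittleO_one_iff ℝ).2 hg).mul_isBigO (isBigO_refl g l)
  refine IsBigO.trans_isLittleO (IsBigO.of_bound C ?_) hsq
  filter_upwards [h] with x hx
  simpa [Real.norm_eq_abs, abs_of_nonneg (sq_nonneg (g x))] using hx

section Rpow

variable {p : ℝ}

lemma tendsto_rpow_div_self (hp : p < 1) : Tendsto (fun x : ℝ => x ^ p / x) atTop (𝓝 0) := by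
  refine (tendsto_rpow_neg_atTop (sub_pos.2 hp)).congr' ?_
  filter_upwards [eventually_gt_atTop 0] with x hx
  rw [neg_sub, Real.rpow_sub_one hx.ne']

lemma isLittleO_rpow_self (hp : p < 1) : (fun x : ℝ => x ^ p) =o[atTop] fun x => x :=
  (isLittleO_iff_tendsto' ((eventually_gt_atTop 0).mono fun _ hx h0 => absurd h0 hx.ne')).2
    (tendsto_rpow_div_self hp)

lemma regVarTail_rpow (p : ℝ) : RegVarTail (fun x => x ^ p) (-p) := fun y hy => by
  rw [neg_neg]
  refine tendsto_const_nhds.congr' ?_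
  filter_upwards [eventually_gt_atTop 0] with x hx
  rw [Real.mul_rpow hx.le hy.le, mul_div_cancel_left₀ _ (Real.rpow_pos_of_pos hx p).ne']

lemma weaklySelfNeg_rpow (hp : p < 1) : WeaklySelfNeg fun x => x ^ p := by
  intro y
  have hbase : Tendsto (fun x : ℝ => (x + y * x ^ p) / x) atTop (𝓝 1) := by
    have h : Tendsto (fun x : ℝ => 1 + y * (x ^ p / x)) atTop (𝓝 1) := by
      simpa using ((tendsto_rpow_div_self hp).const_mul y).const_add 1
    refine h.congr' ?_
    filter_upwards [eventually_gt_atTop 0] with x hx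
    rw [add_div, div_self hx.ne', mul_div_assoc]
  have hlim : Tendsto (fun x : ℝ => (x + y * x ^ p) ^ p / x ^ p) atTop (𝓝 1) := by
    have h : Tendsto (fun x : ℝ => ((x + y * x ^ p) / x) ^ p) atTop (𝓝 1) := by
      simpa using hbase.rpow_const (p := p) (Or.inl one_ne_zero)
    refine h.congr' ?_
    filter_upwards [eventually_gt_atTop 0, hbase.eventually_const_lt zero_lt_one] with x hx hpos
    rw [← Real.div_rpow _ hx.le]
    exact (div_pos_iff_of_pos_right hx).1 hpos |>.le
  rw [(EReal.tendsto_coe.2 hlim).limsup_eq]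
  exact EReal.coe_lt_top 1

end Rpow

namespace RegVarTail

variable {T : ℝ → ℝ} {α : ℝ}

lemma pos (hT : RegVarTail T α) (hanti : Antitone T) (hnn : ∀ x, 0 ≤ T x) (x : ℝ) :
    0 < T x := by
  by_contra! hx
  have hzero : ∀ y ≥ x, T y = 0 := fun y hy => le_antisymm ((hanti hy).trans hx) (hnn y)
  have h0 : Tendsto (fun y => T (y * 2) / T y) atTop (𝓝 0) :=
    tendsto_const_nhds.congr' <| by
      filter_upwards [eventually_ge_atTop x] with y hy
      simp [hzero y hy]
  exact (Real.rpow_pos_of_pos two_pos (-α)).ne' (tendsto_nhds_unique (hT 2 two_pos) h0)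

lemma of_isEquivalent {f g : ℝ → ℝ} (hg : RegVarTail g α) (h : f ~[atTop] g) :
    RegVarTail f α := fun y hy =>
  ((h.comp_tendsto (tendsto_id.atTop_mul_const hy)).div h).tendsto_nhds_iff.2 (hg y hy)

lemma sum {ι : Type*} {s : Finset ι} (hs : s.Nonempty) {T : ι → ℝ → ℝ}
    (hT : ∀ i ∈ s, RegVarTail (T i) α) (hpos : ∀ i ∈ s, ∀ x, 0 < T i x) :
    RegVarTail (fun x => ∑ i ∈ s, T i x) α := fun y hy =>
  tendsto_sum_div_sum hs hpos fun i hi => hT i hi y hy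

lemma domVarFun (hT : RegVarTail T α) : DomVarFun T :=
  domVarFun_of_tendsto fun y hy => ⟨_, Real.rpow_pos_of_pos hy _, hT y hy⟩

lemma isBigO_rpow (hT : RegVarTail T α) (hanti : Antitone T) (hpos : ∀ x, 0 < T x) {a : ℝ}
    (ha : -α < a) (ha0 : a ≤ 0) : T =O[atTop] fun x => x ^ a := by
  obtain ⟨x₀, hx₀⟩ := eventually_atTop.1 <|
    ((hT 2 two_pos).eventually_lt_const ((Real.rpow_lt_rpow_left_iff one_lt_two).2 ha)).and
      (eventually_gt_atTop 0)
  have hx₀pos : 0 < x₀ := (hx₀ x₀ le_rfl).2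
  have hstep : ∀ x ≥ x₀, T (x * 2) ≤ 2 ^ a * T x := fun x hx =>
    ((div_lt_iff₀ (hpos x)).1 (hx₀ x hx).1).le
  refine IsBigO.of_bound (T x₀ * (2 * x₀) ^ (-a)) ?_
  filter_upwards [eventually_ge_atTop x₀] with x hx
  have hx0 : 0 < x := hx₀pos.trans_le hx
  obtain ⟨k, hk, hk'⟩ := exists_nat_pow_near ((one_le_div hx₀pos).2 hx) one_lt_two
  rw [le_div_iff₀ hx₀pos] at hk
  rw [div_lt_iff₀ hx₀pos, pow_succ] at hk'
  rw [Real.norm_of_nonneg (hpos x).le, Real.norm_of_nonneg (by positivity)]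
  calc T x ≤ T (x₀ * 2 ^ k) := hanti (by linarith)
    _ ≤ ((2 : ℝ) ^ k) ^ a * T x₀ := le_two_pow_rpow_mul_of_mul_two_le hx₀pos.le hstep k
    _ ≤ (x / (2 * x₀)) ^ a * T x₀ := by
        refine mul_le_mul_of_nonneg_right
          (Real.rpow_le_rpow_of_nonpos (by positivity) ?_ ha0) (hpos _).le
        rw [div_le_iff₀ (by positivity)]
        linarith
    _ = T x₀ * (2 * x₀) ^ (-a) * x ^ a := by
        rw [Real.div_rpow hx0.le (by positivity), Real.rpow_neg (by positivity)]
        ring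

lemma rpow_isBigO (hT : RegVarTail T α) (hanti : Antitone T) (hpos : ∀ x, 0 < T x) {b : ℝ}
    (hb : b < -α) (hb0 : b ≤ 0) : (fun x => x ^ b) =O[atTop] T := by
  obtain ⟨x₀, hx₀⟩ := eventually_atTop.1 <|
    ((hT 2 two_pos).eventually_const_lt ((Real.rpow_lt_rpow_left_iff one_lt_two).2 hb)).and
      (eventually_gt_atTop 0)
  have hx₀pos : 0 < x₀ := (hx₀ x₀ le_rfl).2
  have hstep : ∀ x ≥ x₀, -T (x * 2) ≤ 2 ^ b * -T x := fun x hx => by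
    linarith [(lt_div_iff₀ (hpos x)).1 (hx₀ x hx).1]
  refine IsBigO.of_bound ((2 / x₀) ^ b * T x₀)⁻¹ ?_
  filter_upwards [eventually_ge_atTop x₀] with x hx
  have hx0 : 0 < x := hx₀pos.trans_le hx
  obtain ⟨k, hk, hk'⟩ := exists_nat_pow_near ((one_le_div hx₀pos).2 hx) one_lt_two
  rw [div_lt_iff₀ hx₀pos] at hk'
  rw [Real.norm_of_nonneg (by positivity), Real.norm_of_nonneg (hpos x).le,
    inv_mul_eq_div, le_div_iff₀ (mul_pos (by positivity) (hpos x₀))]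
  calc x ^ b * ((2 / x₀) ^ b * T x₀) = (2 / x₀ * x) ^ b * T x₀ := by
        rw [Real.mul_rpow (by positivity) hx0.le]; ring
    _ ≤ ((2 : ℝ) ^ (k + 1)) ^ b * T x₀ := by
        refine mul_le_mul_of_nonneg_right
          (Real.rpow_le_rpow_of_nonpos (by positivity) ?_ hb0) (hpos _).le
        rw [pow_succ, div_mul_eq_mul_div, le_div_iff₀ hx₀pos]
        rw [le_div_iff₀ hx₀pos] at hk
        linarith
    _ ≤ T (x₀ * 2 ^ (k + 1)) := by
        linarith [le_two_pow_rpow_mul_of_mul_two_le (g := fun x => -T x) hx₀pos.le hstep (k + 1)]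
    _ ≤ T x := hanti (by linarith)

lemma tendsto_add_div (hT : RegVarTail T α) (hanti : Antitone T) (hpos : ∀ x, 0 < T x)
    {u : ℝ → ℝ} (hu : u =o[atTop] fun x => x) :
    Tendsto (fun x => T (x + u x) / T x) atTop (𝓝 1) := by
  have hcont : Tendsto (fun c : ℝ => c ^ (-α)) (𝓝 1) (𝓝 1) := by
    simpa using (Real.continuousAt_rpow_const 1 (-α) (Or.inl one_ne_zero)).tendsto
  refine tendsto_order.2 ⟨fun a ha => ?_, fun b hb => ?_⟩
  · obtain ⟨c, hca, hc1⟩ : ∃ c, a < c ^ (-α) ∧ 1 < c :=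
      (((hcont.eventually (lt_mem_nhds ha)).filter_mono nhdsWithin_le_nhds).and
        self_mem_nhdsWithin).exists (f := 𝓝[>] 1)
    filter_upwards [(hT c (by linarith)).eventually_const_lt hca, hu.def (sub_pos.2 hc1),
      eventually_gt_atTop 0] with x hx hux hx0
    refine hx.trans_le (div_le_div_of_nonneg_right (hanti ?_) (hpos x).le)
    rw [Real.norm_eq_abs, Real.norm_eq_abs, abs_of_pos hx0] at hux
    nlinarith [le_abs_self (u x)]
  · obtain ⟨c, ⟨hcb, hc0⟩, hc1⟩ : ∃ c, (c ^ (-α) < b ∧ 0 < c) ∧ c < 1 :=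
      ((((hcont.eventually (gt_mem_nhds hb)).and (lt_mem_nhds one_pos)).filter_mono
        nhdsWithin_le_nhds).and self_mem_nhdsWithin).exists (f := 𝓝[<] 1)
    filter_upwards [(hT c hc0).eventually_lt_const hcb, hu.def (sub_pos.2 hc1),
      eventually_gt_atTop 0] with x hx hux hx0
    refine (div_le_div_of_nonneg_right (hanti ?_) (hpos x).le).trans_lt hx
    rw [Real.norm_eq_abs, Real.norm_eq_abs, abs_of_pos hx0] at hux
    nlinarith [neg_abs_le (u x)]

lemma longTailedT (hT : RegVarTail T α) (hanti : Antitone T) (hpos : ∀ x, 0 < T x) :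
    LongTailedT T :=
  ⟨fun x _ => hpos x, fun y => hT.tendsto_add_div hanti hpos (isLittleO_const_id_atTop y)⟩

lemma memScaleClass_rpow (hT : RegVarTail T α) (hanti : Antitone T) (hpos : ∀ x, 0 < T x)
    {p : ℝ} (hp : p < 1) : MemScaleClass T fun x => x ^ p :=
  ⟨(eventually_gt_atTop 0).mono fun _ hx => Real.rpow_pos_of_pos hx p, isLittleO_rpow_self hp,
    fun y => hT.tendsto_add_div hanti hpos ((isLittleO_rpow_self hp).const_mul_left y),
    weaklySelfNeg_rpow hp⟩

lemma tendsto_sq_comp_rpow_div (hT : RegVarTail T α) (hanti : Antitone T)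
    (hpos : ∀ x, 0 < T x) (hα : 0 < α) {p : ℝ} (hp : 1 / 2 < p) :
    Tendsto (fun x => T (x ^ p) ^ 2 / T x) atTop (𝓝 0) := by
  have hp0 : 0 < p := by linarith
  -- Potter exponents with `-α < a`, `b < -α` and `2 p a < b`
  set a := -α * (1 + 2 * p) / (4 * p) with ha
  set b := -α * (3 + 2 * p) / 4 with hb
  have hupper : (fun x => T (x ^ p)) =O[atTop] fun x => (x ^ p) ^ a :=
    (hT.isBigO_rpow hanti hpos (a := a) (by rw [ha, lt_div_iff₀ (by positivity)]; nlinarith)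
      (by rw [ha]; exact div_nonpos_of_nonpos_of_nonneg (by nlinarith) (by positivity))
      ).comp_tendsto (tendsto_rpow_atTop hp0)
  have hlower : (fun x => (T x)⁻¹) =O[atTop] fun x => (x ^ b)⁻¹ :=
    (hT.rpow_isBigO hanti hpos (b := b) (by rw [hb]; nlinarith) (by rw [hb]; nlinarith)).inv_rev
      ((eventually_gt_atTop 0).mono fun x hx h0 => absurd h0 (Real.rpow_pos_of_pos hx b).ne')
  simp only [div_eq_mul_inv]
  refine ((hupper.pow 2).mul hlower).trans_tendsto <|
    (tendsto_rpow_neg_atTop (y := α * (2 * p - 1) / 4) (by nlinarith)).congr' ?_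
  filter_upwards [eventually_gt_atTop 0] with x hx
  rw [← Real.rpow_mul hx.le, ← Real.rpow_natCast, ← Real.rpow_mul hx.le,
    ← Real.rpow_neg hx.le, ← Real.rpow_add hx]
  congr 1
  rw [ha, hb]
  field_simp
  ring

end RegVarTail

section FGMCopula

open Finset

variable {ι : Type*}

lemma prod_one_sub_sub_one_sub_sum_mem_Icc (s : Finset ι) {t : ι → ℝ}
    (ht0 : ∀ i, 0 ≤ t i) (ht1 : ∀ i, t i ≤ 1) :
    ∏ i ∈ s, (1 - t i) - (1 - ∑ i ∈ s, t i) ∈ Set.Icc 0 ((∑ i ∈ s, t i) ^ 2) := by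
  classical
  induction s using Finset.induction_on with
  | empty => simp
  | insert a s ha ih =>
    rw [prod_insert ha, sum_insert ha, Set.mem_Icc]
    have hS : 0 ≤ ∑ i ∈ s, t i := sum_nonneg fun i _ => ht0 i
    have h0 := ht0 a
    have h1 := ht1 a
    -- `P' - (1 - S') = (1 - tₐ) (P - (1 - S)) + tₐ S`
    constructor <;> nlinarith [ih.1, ih.2, mul_nonneg h0 hS]

variable [Fintype ι]

def fgmCopula (θ : Finset ι → ℝ) (u : ι → ℝ) : ℝ :=
  (∏ i, u i) * (1 + ∑ S ∈ univ.powerset.filter (fun S : Finset ι => 2 ≤ S.card),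
    θ S * ∏ j ∈ S, (1 - u j))

lemma prod_le_sq_sum_of_two_le_card {S : Finset ι} (hS : 2 ≤ S.card) {t : ι → ℝ}
    (ht0 : ∀ i, 0 ≤ t i) (ht1 : ∀ i, t i ≤ 1) : ∏ j ∈ S, t j ≤ (∑ i, t i) ^ 2 := by
  classical
  obtain ⟨a, ha, b, hb, hab⟩ := one_lt_card.1 hS
  have hrest : ∏ j ∈ (S.erase a).erase b, t j ≤ 1 :=
    prod_le_one (fun j _ => ht0 j) (fun j _ => ht1 j)
  have hsum : t a + t b ≤ ∑ i, t i := by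
    rw [← sum_pair hab]
    exact sum_le_univ_sum_of_nonneg ht0
  rw [← prod_erase_mul _ _ ha, ← prod_erase_mul _ _ (mem_erase.2 ⟨hab.symm, hb⟩), mul_assoc]
  calc _ ≤ t b * t a := mul_le_of_le_one_left (mul_nonneg (ht0 b) (ht0 a)) hrest
    _ ≤ (∑ i, t i) ^ 2 := by nlinarith [ht0 a, ht0 b]

lemma abs_one_sub_fgmCopula_one_sub_sub_sum_le {θ : Finset ι → ℝ} (hθ : ∀ S, |θ S| ≤ 1)
    {t : ι → ℝ} (ht0 : ∀ i, 0 ≤ t i) (ht1 : ∀ i, t i ≤ 1) :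
    |1 - fgmCopula θ (fun i => 1 - t i) - ∑ i, t i| ≤
      (1 + 2 ^ Fintype.card ι) * (∑ i, t i) ^ 2 := by
  set 𝒮 := univ.powerset.filter fun S : Finset ι => 2 ≤ S.card
  set P := ∏ i, (1 - t i)
  set R := ∑ S ∈ 𝒮, θ S * ∏ j ∈ S, t j
  have hfgm : fgmCopula θ (fun i => 1 - t i) = P * (1 + R) := by simp [fgmCopula, 𝒮, P, R]
  have hP : |1 - ∑ i, t i - P| ≤ (∑ i, t i) ^ 2 := by
    obtain ⟨h0, h1⟩ := prod_one_sub_sub_one_sub_sum_mem_Icc univ ht0 ht1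
    exact abs_le.2 ⟨by linarith, by linarith⟩
  have hR : |R| ≤ 2 ^ Fintype.card ι * (∑ i, t i) ^ 2 := by
    calc |R| ≤ ∑ S ∈ 𝒮, (∑ i, t i) ^ 2 := by
          refine (abs_sum_le_sum_abs _ _).trans (sum_le_sum fun S hS => ?_)
          rw [abs_mul, abs_of_nonneg (prod_nonneg fun j _ => ht0 j)]
          exact (mul_le_of_le_one_left (prod_nonneg fun j _ => ht0 j) (hθ S)).trans
            (prod_le_sq_sum_of_two_le_card (mem_filter.1 hS).2 ht0 ht1)
      _ ≤ 2 ^ Fintype.card ι * (∑ i, t i) ^ 2 := by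
          rw [sum_const, nsmul_eq_mul]
          refine mul_le_mul_of_nonneg_right ?_ (sq_nonneg _)
          have hcard : 𝒮.card ≤ 2 ^ Fintype.card ι :=
            (card_filter_le _ _).trans_eq (by rw [card_powerset, card_univ])
          exact_mod_cast hcard
  have hPR : |P * R| ≤ |R| := by
    rw [abs_mul]
    exact mul_le_of_le_one_left (abs_nonneg R)
      (abs_le.2 ⟨by linarith [prod_nonneg fun i (_ : i ∈ univ) => sub_nonneg.2 (ht1 i)],
        prod_le_one (fun i _ => sub_nonneg.2 (ht1 i)) fun i _ => sub_le_self 1 (ht0 i)⟩)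
  calc |1 - fgmCopula θ (fun i => 1 - t i) - ∑ i, t i| = |(1 - ∑ i, t i - P) - P * R| := by
        rw [hfgm]; congr 1; ring
    _ ≤ |1 - ∑ i, t i - P| + |P * R| := abs_sub _ _
    _ ≤ (1 + 2 ^ Fintype.card ι) * (∑ i, t i) ^ 2 := by linarith

end FGMCopula

section Tail

variable {Ω : Type*} [MeasurableSpace Ω] {μ : Measure Ω} {Y : Ω → ℝ}

lemma tailP_nonneg (μ : Measure Ω) (Y : Ω → ℝ) (x : ℝ) : 0 ≤ tailP μ Y x :=
  ENNReal.toReal_nonneg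

lemma tailP_antitone [IsFiniteMeasure μ] : Antitone (tailP μ Y) := fun _ _ hab =>
  ENNReal.toReal_mono (measure_ne_top μ _) (measure_mono fun _ hω => hab.trans_lt hω)

variable [IsProbabilityMeasure μ]

lemma tailP_eq_one_sub_measure_le (hY : Measurable Y) (x : ℝ) :
    tailP μ Y x = 1 - (μ {ω | Y ω ≤ x}).toReal := by
  have : {ω | x < Y ω} = {ω | Y ω ≤ x}ᶜ := by ext; simp
  rw [tailP, this, ← measureReal_def, ← measureReal_def,
    probReal_compl_eq_one_sub (measurableSet_le hY measurable_const)]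

lemma tailP_eq_one_sub_cdf (hY : Measurable Y) :
    tailP μ Y = fun x => 1 - cdf (μ.map Y) x := by
  have := Measure.isProbabilityMeasure_map (μ := μ) hY.aemeasurable
  ext x
  rw [tailP_eq_one_sub_measure_le hY, cdf_eq_real, measureReal_def,
    Measure.map_apply hY measurableSet_Iic]
  rfl

variable (μ Y) in
lemma tailP_le_one (x : ℝ) : tailP μ Y x ≤ 1 := measureReal_le_one

variable (μ Y) in
lemma abs_tailP_le_one (x : ℝ) : |tailP μ Y x| ≤ 1 :=
  abs_le.2 ⟨by linarith [tailP_nonneg μ Y x], tailP_le_one μ Y x⟩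

variable (μ Y) in
lemma abs_one_sub_tailP_le_one (x : ℝ) : |1 - tailP μ Y x| ≤ 1 :=
  abs_le.2 ⟨by linarith [tailP_le_one μ Y x], by linarith [tailP_nonneg μ Y x]⟩

variable (μ) in
lemma tendsto_tailP_atTop (hY : Measurable Y) : Tendsto (tailP μ Y) atTop (𝓝 0) := by
  simpa [tailP_eq_one_sub_cdf hY] using (tendsto_cdf_atTop (μ.map Y)).const_sub 1

variable (μ) in
lemma tendsto_tailP_atBot (hY : Measurable Y) : Tendsto (tailP μ Y) atBot (𝓝 1) := by
  simpa [tailP_eq_one_sub_cdf hY] using (tendsto_cdf_atBot (μ.map Y)).const_sub 1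

end Tail

section Max

variable {Ω : Type*} [MeasurableSpace Ω] {μ : Measure Ω} {n : ℕ}

lemma tailP_le_tailP_maxRV [IsFiniteMeasure μ] (X : Fin n → Ω → ℝ) (i : Fin n) (x : ℝ) :
    tailP μ (X i) x ≤ tailP μ (maxRV X) x :=
  ENNReal.toReal_mono (measure_ne_top μ _) <| measure_mono fun ω (hω : x < X i ω) =>
    hω.trans_le (le_ciSup (Set.finite_range fun m => X m ω).bddAbove i)

lemma tailP_maxRV_eq [IsProbabilityMeasure μ] [NeZero n] {X : Fin n → Ω → ℝ}
    (hX : ∀ i, Measurable (X i)) (x : ℝ) :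
    tailP μ (maxRV X) x = 1 - (μ {ω | ∀ i, X i ω ≤ x}).toReal := by
  have hset : {ω | x < maxRV X ω} = {ω | ∀ i, X i ω ≤ x}ᶜ := by
    ext ω
    simpa [maxRV] using lt_ciSup_iff (Set.finite_range fun m => X m ω).bddAbove
  have hmeas : MeasurableSet {ω | ∀ i, X i ω ≤ x} := by
    simpa only [Set.ofPred_forall] using
      MeasurableSet.iInter fun i => measurableSet_le (hX i) measurable_const
  rw [tailP, hset, ← measureReal_def, ← measureReal_def, probReal_compl_eq_one_sub hmeas]

lemma tailP_maxRV_isEquivalent_sum [IsProbabilityMeasure μ] [NeZero n] {X : Fin n → Ω → ℝ}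
    (hX : ∀ i, Measurable (X i)) {θ : Finset (Fin n) → ℝ} (hθ : ∀ S, |θ S| ≤ 1)
    (hjoint : ∀ x, (μ {ω | ∀ i, X i ω ≤ x}).toReal =
      fgmCopula θ (fun i => 1 - tailP μ (X i) x)) :
    tailP μ (maxRV X) ~[atTop] fun x => ∑ i, tailP μ (X i) x := by
  refine isEquivalent_of_abs_sub_le_mul_sq (C := 1 + 2 ^ Fintype.card (Fin n))
    (by simpa using tendsto_finsetSum _ fun i _ => tendsto_tailP_atTop μ (hX i))
    (Eventually.of_forall fun x => ?_)
  rw [tailP_maxRV_eq hX, hjoint]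
  exact abs_one_sub_fgmCopula_one_sub_sub_sum_le hθ (fun i => tailP_nonneg μ (X i) x)
    (fun i => tailP_le_one μ (X i) x)

end Max

section FGMPair

variable {Ω : Type*} [MeasurableSpace Ω] {μ : Measure Ω} [IsProbabilityMeasure μ]
  {Y Z : Ω → ℝ} {θ : ℝ}

variable (μ) in
def IsFGMPair (Y Z : Ω → ℝ) (θ : ℝ) : Prop :=
  ∀ s t : ℝ, (μ {ω | s < Y ω ∧ t < Z ω}).toReal =
    tailP μ Y s * tailP μ Z t * (1 + θ * (1 - tailP μ Y s) * (1 - tailP μ Z t))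

lemma IsFGMPair.measure_lt_and_lt_le (h : IsFGMPair μ Y Z θ) (hθ : |θ| ≤ 1) (s t : ℝ) :
    (μ {ω | s < Y ω ∧ t < Z ω}).toReal ≤ 2 * tailP μ Y s * tailP μ Z t := by
  have hfac := (le_abs_self _).trans <|
    abs_mul_mul_le_one hθ (abs_one_sub_tailP_le_one μ Y s) (abs_one_sub_tailP_le_one μ Z t)
  calc _ = tailP μ Y s * tailP μ Z t * (1 + θ * (1 - tailP μ Y s) * (1 - tailP μ Z t)) := h s t
    _ ≤ tailP μ Y s * tailP μ Z t * 2 :=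
        mul_le_mul_of_nonneg_left (by linarith)
          (mul_nonneg (tailP_nonneg μ Y s) (tailP_nonneg μ Z t))
    _ = 2 * tailP μ Y s * tailP μ Z t := by ring

lemma IsFGMPair.measure_le_and_lt_le (h : IsFGMPair μ Y Z θ) (hθ : |θ| ≤ 1)
    (hY : Measurable Y) (s t : ℝ) :
    (μ {ω | Y ω ≤ s ∧ t < Z ω}).toReal ≤ 2 * (1 - tailP μ Y s) * tailP μ Z t := by
  have hsplit := measureReal_inter_add_sdiff (μ := μ) (s := {ω | t < Z ω})
    (measurableSet_lt measurable_const hY : MeasurableSet {ω | s < Y ω})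
  have hinter : {ω | t < Z ω} ∩ {ω | s < Y ω} = {ω | s < Y ω ∧ t < Z ω} := by
    ext; simp [and_comm]
  have hdiff : {ω | t < Z ω} \ {ω | s < Y ω} = {ω | Y ω ≤ s ∧ t < Z ω} := by
    ext; simp [and_comm]
  rw [hinter, hdiff, measureReal_def, measureReal_def, measureReal_def, h] at hsplit
  have hval : (μ {ω | Y ω ≤ s ∧ t < Z ω}).toReal =
      (1 - tailP μ Y s) * tailP μ Z t * (1 - θ * (1 - tailP μ Z t) * tailP μ Y s) := by
    change _ = tailP μ Z t at hsplit
    linear_combination hsplit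
  have hfac := (neg_le_abs _).trans <|
    abs_mul_mul_le_one hθ (abs_one_sub_tailP_le_one μ Z t) (abs_tailP_le_one μ Y s)
  have hY1 : 0 ≤ 1 - tailP μ Y s := sub_nonneg.2 (tailP_le_one μ Y s)
  calc _ = (1 - tailP μ Y s) * tailP μ Z t * (1 - θ * (1 - tailP μ Z t) * tailP μ Y s) := hval
    _ ≤ (1 - tailP μ Y s) * tailP μ Z t * 2 :=
        mul_le_mul_of_nonneg_left (by linarith) (mul_nonneg hY1 (tailP_nonneg μ Z t))
    _ = 2 * (1 - tailP μ Y s) * tailP μ Z t := by ring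

lemma IsFGMPair.tendsto_measure_abs_lt_and_lt_div (h : IsFGMPair μ Y Z θ) (hθ : |θ| ≤ 1)
    (hY : Measurable Y) {G u : ℝ → ℝ} (hZG : ∀ x, tailP μ Z x ≤ G x)
    (hu : Tendsto u atTop atTop) :
    Tendsto (fun x => (μ {ω | u x < |Y ω| ∧ x < Z ω}).toReal / G x) atTop (𝓝 0) := by
  have hlim :
      Tendsto (fun x => 2 * tailP μ Y (u x) + 2 * (1 - tailP μ Y (-u x))) atTop (𝓝 0) := by
    have hright := (tendsto_tailP_atTop μ hY).comp hu
    have hleft := (tendsto_tailP_atBot μ hY).comp (tendsto_neg_atTop_atBot.comp hu)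
    simpa using (hright.const_mul 2).add ((hleft.const_sub 1).const_mul 2)
  have hG : ∀ x, 0 ≤ G x := fun x => (tailP_nonneg μ Z x).trans (hZG x)
  refine squeeze_zero (fun x => div_nonneg ENNReal.toReal_nonneg (hG x)) (fun x => ?_) hlim
  have hsub : {ω | u x < |Y ω| ∧ x < Z ω} ⊆
      {ω | u x < Y ω ∧ x < Z ω} ∪ {ω | Y ω ≤ -u x ∧ x < Z ω} := by
    rintro ω ⟨hYω, hZω⟩
    rcases lt_abs.1 hYω with hpos | hneg
    exacts [Or.inl ⟨hpos, hZω⟩, Or.inr ⟨by linarith, hZω⟩]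
  have hc : 0 ≤ 2 * tailP μ Y (u x) + 2 * (1 - tailP μ Y (-u x)) := by
    linarith [tailP_nonneg μ Y (u x), tailP_le_one μ Y (-u x)]
  refine div_le_of_le_mul₀ (hG x) hc ?_
  calc (μ {ω | u x < |Y ω| ∧ x < Z ω}).toReal
      ≤ (μ {ω | u x < Y ω ∧ x < Z ω}).toReal +
          (μ {ω | Y ω ≤ -u x ∧ x < Z ω}).toReal :=
        (measureReal_mono hsub).trans (measureReal_union_le _ _)
    _ ≤ 2 * tailP μ Y (u x) * tailP μ Z x + 2 * (1 - tailP μ Y (-u x)) * tailP μ Z x :=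
        add_le_add (h.measure_lt_and_lt_le hθ _ _) (h.measure_le_and_lt_le hθ hY _ _)
    _ ≤ (2 * tailP μ Y (u x) + 2 * (1 - tailP μ Y (-u x))) * G x := by
        rw [← add_mul]
        exact mul_le_mul_of_nonneg_left (hZG x) hc

lemma IsFGMPair.tendsto_measure_lt_and_lt_div (h : IsFGMPair μ Y Z θ) (hθ : |θ| ≤ 1)
    {G v : ℝ → ℝ} (hYG : ∀ x, tailP μ Y x ≤ G x) (hZG : ∀ x, tailP μ Z x ≤ G x)
    (hv : Tendsto (fun x => G (v x) ^ 2 / G x) atTop (𝓝 0)) :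
    Tendsto (fun x => (μ {ω | v x < Y ω ∧ v x < Z ω}).toReal / G x) atTop (𝓝 0) := by
  have hG : ∀ x, 0 ≤ G x := fun x => (tailP_nonneg μ Z x).trans (hZG x)
  refine squeeze_zero (fun x => div_nonneg ENNReal.toReal_nonneg (hG x)) (fun x => ?_)
    (by simpa using hv.const_mul 2)
  rw [← mul_div_assoc]
  refine div_le_div_of_nonneg_right ((h.measure_lt_and_lt_le hθ _ _).trans ?_) (hG x)
  rw [mul_assoc, sq]
  exact mul_le_mul_of_nonneg_left (mul_le_mul (hYG _) (hZG _) (tailP_nonneg μ Z _)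
    ((tailP_nonneg μ Y _).trans (hYG _))) zero_le_two

end FGMPair

/-- Example 4.2: risks with regularly varying marginals coupled by a
multivariate Farlie–Gumbel–Morgenstern copula satisfy Assumptions B and C, with
`h(x) = x^p` for any `p ∈ (1/2, 1)` and `L = 1`. -/
theorem fgm_copula_satisfies_assumptions_B_and_C
    {Ω : Type*} [MeasurableSpace Ω] (μ : Measure Ω) [IsProbabilityMeasure μ]
    {n : ℕ} [NeZero n] (X : Fin n → Ω → ℝ) (hXm : ∀ i, Measurable (X i))
    (F : Fin n → ℝ → ℝ) (hF : ∀ i x, F i x = (μ {ω | X i ω ≤ x}).toReal)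
    (α : ℝ) (hα : 0 < α)
    (hreg : ∀ i, RegVarTail (tailP μ (X i)) α)
    (θ : Finset (Fin n) → ℝ) (hθ : ∀ S, |θ S| ≤ 1)
    (hjoint : ∀ xv : Fin n → ℝ,
      (μ {ω | ∀ i, X i ω ≤ xv i}).toReal =
        (∏ i, F i (xv i)) *
          (1 + ∑ S ∈ Finset.univ.powerset.filter (fun S : Finset (Fin n) => 2 ≤ S.card),
            θ S * ∏ j ∈ S, (1 - F j (xv j))))
    (hpair : ∀ i j : Fin n, i ≠ j → ∀ s t : ℝ,
      (μ {ω | s < X i ω ∧ t < X j ω}).toReal =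
        tailP μ (X i) s * tailP μ (X j) t * (1 + θ {i, j} * F i s * F j t)) :
    RegVarTail (tailP μ (maxRV X)) α ∧
    LongTailedT (tailP μ (maxRV X)) ∧
    DomVarFun (tailP μ (maxRV X)) ∧
    ∀ p : ℝ, 1 / 2 < p → p < 1 →
      DomVarFun (fun x => x ^ p) ∧
      MemScaleClass (tailP μ (maxRV X)) (fun x => x ^ p) ∧
      DS1 μ X (fun x => x ^ p) ∧
      DS2 μ X (fun x => x ^ p) 1 := by
  have hFT : ∀ i x, F i x = 1 - tailP μ (X i) x := fun i x => by
    rw [hF, tailP_eq_one_sub_measure_le (hXm i)]; ring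
  have hpairFGM : ∀ i j, i ≠ j → IsFGMPair μ (X i) (X j) (θ {i, j}) := fun i j hij s t => by
    rw [hpair i j hij, hFT, hFT]
  have hTpos : ∀ i x, 0 < tailP μ (X i) x := fun i =>
    (hreg i).pos tailP_antitone (tailP_nonneg μ (X i))
  have hTG := tailP_le_tailP_maxRV (μ := μ) X
  have hGpos : ∀ x, 0 < tailP μ (maxRV X) x := fun x => (hTpos 0 x).trans_le (hTG 0 x)
  have hGsum := tailP_maxRV_isEquivalent_sum (μ := μ) hXm hθ fun x => by
    simp only [hjoint (fun _ => x), hFT, fgmCopula]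
  have hGreg : RegVarTail (tailP μ (maxRV X)) α :=
    (RegVarTail.sum Finset.univ_nonempty (fun i _ => hreg i) fun i _ => hTpos i).of_isEquivalent
      hGsum
  refine ⟨hGreg, hGreg.longTailedT tailP_antitone hGpos, hGreg.domVarFun,
    fun p hp hp1 => ⟨(regVarTail_rpow p).domVarFun,
      hGreg.memScaleClass_rpow tailP_antitone hGpos hp1, ?_, ?_⟩⟩
  · intro t ht i j hij
    exact (hpairFGM i j hij).tendsto_measure_abs_lt_and_lt_div (hθ _) (hXm i) (hTG j)
      ((tendsto_rpow_atTop (by linarith)).const_mul_atTop ht)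
  · intro i j hij
    simpa only [one_mul] using (hpairFGM i j hij.ne).tendsto_measure_lt_and_lt_div (hθ _)
      (hTG i) (hTG j) (hGreg.tendsto_sq_comp_rpow_div tailP_antitone hGpos hα hp)
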